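/- arXiv:2601.01594 — 4 statements merged into one kernel-verified Lean document; each statement's English description precedes it below -/
import Mathlib

section
/- Let p_0 be a strictly positive, continuously differentiable probability density on ℝ^d whose score s_0 = ∇ log p_0 is integrable against the OU posterior, and assume differentiation under the integral sign in y and integration by parts in x with vanishing boundary terms are valid (e.g. p_0 and ∇p_0 decay sufficiently at infinity). Then for every t > 0 and every y ∈ ℝ^d, the time-t score satisfies the Target Score Identity: ∇_y log p_t(y) = e^t ∫_{ℝ^d} s_0(x) p_{t|0}(x ∣ y) dx. -/
open MeasureTheory Real

noncomputable section

/-- The OU forward transition density `p_{t|0}(y ∣ x)`. -/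
def ouKernel (d : ℕ) (t : ℝ) (x y : EuclideanSpace ℝ (Fin d)) : ℝ :=
  (2 * π * (1 - Real.exp (-2 * t))) ^ (-(d : ℝ) / 2) *
    Real.exp (-‖y - Real.exp (-t) • x‖ ^ 2 / (2 * (1 - Real.exp (-2 * t))))

/-- The time-`t` marginal `p_t(y) = ∫ p_{t|0}(y ∣ x) p_0(x) dx`. -/
def ouMarginal (d : ℕ) (t : ℝ) (p0 : EuclideanSpace ℝ (Fin d) → ℝ)
    (y : EuclideanSpace ℝ (Fin d)) : ℝ :=
  ∫ x, ouKernel d t x y * p0 x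

/-- The OU posterior density `p_{t|0}(x ∣ y) = p_0(x) p_{t|0}(y ∣ x) / p_t(y)`. -/
def ouPosterior (d : ℕ) (t : ℝ) (p0 : EuclideanSpace ℝ (Fin d) → ℝ)
    (x y : EuclideanSpace ℝ (Fin d)) : ℝ :=
  p0 x * ouKernel d t x y / ouMarginal d t p0 y

section Aux

variable {F : Type*} [NormedAddCommGroup F] [InnerProductSpace ℝ F] [CompleteSpace F]

lemma myToDual_smul (c : ℝ) (g : F) :
    InnerProductSpace.toDual ℝ F (c • g) = c • InnerProductSpace.toDual ℝ F g := by
  ext w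
  simp [InnerProductSpace.toDual_apply_apply, real_inner_smul_left]

lemma hasGradientAt_smul_of_hasFDerivAt {f : F → ℝ} {g : F} {c : ℝ} {x : F}
    (h : HasFDerivAt f (c • (InnerProductSpace.toDual ℝ F g)) x) :
    HasGradientAt f (c • g) x := by
  rw [hasGradientAt_iff_hasFDerivAt, myToDual_smul]
  exact h

lemma HasGradientAt.mulConst {f : F → ℝ} {g : F} {x : F} (h : HasGradientAt f g x) (c : ℝ) :
    HasGradientAt (fun z => f z * c) (c • g) x := by
  rw [hasGradientAt_iff_hasFDerivAt] at h ⊢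
  rw [myToDual_smul]
  exact h.mul_const c

/-- Gradient of a Gaussian-type function `z ↦ C exp(-‖v - a z‖² / b)`. -/
lemma gauss_grad (C b : ℝ) (v x₀ : F) (a : ℝ) :
    HasGradientAt (fun z : F => C * Real.exp (-‖v - a • z‖ ^ 2 / b))
      ((C * Real.exp (-‖v - a • x₀‖ ^ 2 / b) * (2 * a / b)) • (v - a • x₀)) x₀ := by
  have h1 : HasFDerivAt (fun z : F => v - a • z) (-(a • ContinuousLinearMap.id ℝ F)) x₀ :=
    ((hasFDerivAt_id x₀).const_smul a).const_sub v
  have h2 := h1.norm_sq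
  have h3 := ((h2.const_mul (-b⁻¹)).exp.const_mul C)
  have hfun : (fun z : F => C * Real.exp (-b⁻¹ * ‖v - a • z‖ ^ 2))
      = fun z : F => C * Real.exp (-‖v - a • z‖ ^ 2 / b) := by
    funext z
    rw [show -b⁻¹ * ‖v - a • z‖ ^ 2 = -‖v - a • z‖ ^ 2 / b from by ring]
  rw [hfun, show -b⁻¹ * ‖v - a • x₀‖ ^ 2 = -‖v - a • x₀‖ ^ 2 / b from by ring] at h3
  apply hasGradientAt_smul_of_hasFDerivAt
  refine h3.congr_fderiv ?_
  ext w
  simp [InnerProductSpace.toDual_apply_apply, real_inner_smul_left, real_inner_smul_right,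
    inner_neg_right]
  ring

end Aux

/-- **Target Score Identity (TSI).** If `p₀` is a strictly positive `C¹` probability density on
`ℝ^d` whose score `s₀ = ∇ log p₀` is integrable against the OU posterior, the time-`t` marginal
is finite and positive, differentiation under the integral sign in `y` is valid, and integration
by parts in `x` with vanishing boundary terms is valid, then for every `t > 0` and `y`,
`∇_y log p_t(y) = e^t ∫ s₀(x) p_{t|0}(x ∣ y) dx`. -/
theorem target_score_identity
    (d : ℕ) (p0 : EuclideanSpace ℝ (Fin d) → ℝ)
    (hp0_pos : ∀ x, 0 < p0 x)
    (hp0_smooth : ContDiff ℝ 1 p0)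
    (hp0_prob : ∫ x, p0 x = 1)
    -- the score `s₀ = ∇ log p₀` is integrable against the OU posterior
    (h_score_int : ∀ t, 0 < t → ∀ y, Integrable (fun x =>
        ouPosterior d t p0 x y • gradient (fun z => Real.log (p0 z)) x))
    -- the time-`t` marginal is finite and positive
    (h_marg_int : ∀ t, 0 < t → ∀ y, Integrable (fun x => ouKernel d t x y * p0 x))
    (h_marg_pos : ∀ t, 0 < t → ∀ y, 0 < ouMarginal d t p0 y)
    -- differentiation under the integral sign in `y` is valid
    (h_swap : ∀ t, 0 < t → ∀ y, gradient (fun y' => ouMarginal d t p0 y') y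
        = ∫ x, gradient (fun y' => ouKernel d t x y' * p0 x) y)
    -- integration by parts in `x` with vanishing boundary terms is valid
    (h_ibp : ∀ t, 0 < t → ∀ y, (∫ x, p0 x • gradient (fun x' => ouKernel d t x' y) x)
        = - ∫ x, (ouKernel d t x y * p0 x) • gradient (fun z => Real.log (p0 z)) x) :
    ∀ t, 0 < t → ∀ y,
      gradient (fun y' => Real.log (ouMarginal d t p0 y')) y
        = Real.exp t • ∫ x, ouPosterior d t p0 x y • gradient (fun z => Real.log (p0 z)) x := by
  intro t ht y
  have hexp : Real.exp t * Real.exp (-t) = 1 := by rw [← Real.exp_add]; simp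
  have hMpos : 0 < ouMarginal d t p0 y := h_marg_pos t ht y
  have hMne : ouMarginal d t p0 y ≠ 0 := ne_of_gt hMpos
  -- the key pointwise relation between the `y`- and `x`-gradients of the kernel
  have key : ∀ x, gradient (fun y' => ouKernel d t x y' * p0 x) y
      = (-Real.exp t) • (p0 x • gradient (fun x' => ouKernel d t x' y) x) := by
    intro x
    have hGx : HasGradientAt (fun x' => ouKernel d t x' y)
        (((2 * π * (1 - Real.exp (-2 * t))) ^ (-(d : ℝ) / 2) *
            Real.exp (-‖y - Real.exp (-t) • x‖ ^ 2 / (2 * (1 - Real.exp (-2 * t)))) *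
            (2 * Real.exp (-t) / (2 * (1 - Real.exp (-2 * t))))) •
          (y - Real.exp (-t) • x)) x :=
      gauss_grad _ _ y x _
    have hGy := (gauss_grad ((2 * π * (1 - Real.exp (-2 * t))) ^ (-(d : ℝ) / 2))
      (2 * (1 - Real.exp (-2 * t))) (Real.exp (-t) • x) y 1).mulConst (p0 x)
    have hfe : (fun z : EuclideanSpace ℝ (Fin d) =>
          (2 * π * (1 - Real.exp (-2 * t))) ^ (-(d : ℝ) / 2) *
            Real.exp (-‖Real.exp (-t) • x - (1:ℝ) • z‖ ^ 2 / (2 * (1 - Real.exp (-2 * t)))) *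
            p0 x)
        = fun y' => ouKernel d t x y' * p0 x := by
      funext z
      rw [one_smul, norm_sub_rev]
      rfl
    rw [hfe] at hGy
    rw [hGy.gradient, hGx.gradient]
    rw [one_smul, norm_sub_rev (Real.exp (-t) • x) y]
    match_scalars
    · linear_combination (-(p0 x * ((2 * π * (1 - Real.exp (-2 * t))) ^ (-(d : ℝ) / 2) *
        Real.exp (-‖y - Real.exp (-t) • x‖ ^ 2 / (2 * (1 - Real.exp (-2 * t))))) * 2 *
        Real.exp (-t) / (2 * (1 - Real.exp (-2 * t))))) * hexp
    · linear_combination (p0 x * ((2 * π * (1 - Real.exp (-2 * t))) ^ (-(d : ℝ) / 2) *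
        Real.exp (-‖y - Real.exp (-t) • x‖ ^ 2 / (2 * (1 - Real.exp (-2 * t))))) * 2 /
        (2 * (1 - Real.exp (-2 * t)))) * hexp
  -- the gradient of the marginal in terms of the posterior-averaged score
  have hJ : gradient (fun y' => ouMarginal d t p0 y') y
      = (Real.exp t * ouMarginal d t p0 y) •
          ∫ x, ouPosterior d t p0 x y • gradient (fun z => Real.log (p0 z)) x := by
    rw [h_swap t ht y]
    simp only [key]
    rw [integral_smul, h_ibp t ht y]
    have hKp : ∀ x, (ouKernel d t x y * p0 x) • gradient (fun z => Real.log (p0 z)) x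
        = ouMarginal d t p0 y •
            (ouPosterior d t p0 x y • gradient (fun z => Real.log (p0 z)) x) := by
      intro x
      rw [smul_smul]
      congr 1
      rw [ouPosterior]
      field_simp
    simp only [hKp]
    rw [integral_smul, smul_neg, neg_smul, neg_neg, smul_smul]
  by_cases hd : DifferentiableAt ℝ (fun y' => ouMarginal d t p0 y') y
  · -- differentiable case: chain rule for the logarithm
    have hF : HasFDerivAt (fun y' => ouMarginal d t p0 y')
        (InnerProductSpace.toDual ℝ (EuclideanSpace ℝ (Fin d))
          (gradient (fun y' => ouMarginal d t p0 y') y)) y :=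
      hd.hasGradientAt.hasFDerivAt
    have hlog := hF.log hMne
    have hGlog : HasGradientAt (fun y' => Real.log (ouMarginal d t p0 y'))
        ((ouMarginal d t p0 y)⁻¹ • gradient (fun y' => ouMarginal d t p0 y') y) y :=
      hasGradientAt_smul_of_hasFDerivAt hlog
    rw [hGlog.gradient, hJ, smul_smul]
    congr 1
    field_simp
  · -- non-differentiable case: both sides vanish
    have hz : gradient (fun y' => ouMarginal d t p0 y') y = 0 :=
      gradient_eq_zero_of_not_differentiableAt hd
    have hI0 : (∫ x, ouPosterior d t p0 x y • gradient (fun z => Real.log (p0 z)) x) = 0 := by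
      rw [hz] at hJ
      have hne : Real.exp t * ouMarginal d t p0 y ≠ 0 := by positivity
      rcases smul_eq_zero.mp hJ.symm with h | h
      · exact absurd h hne
      · exact h
    have hnd : ¬ DifferentiableAt ℝ (fun y' => Real.log (ouMarginal d t p0 y')) y := by
      intro hdl
      apply hd
      have hco : (fun y' => ouMarginal d t p0 y')
          = fun y' => Real.exp (Real.log (ouMarginal d t p0 y')) := by
        funext y'
        exact (Real.exp_log (h_marg_pos t ht y')).symm
      rw [hco]
      exact hdl.exp
    rw [gradient_eq_zero_of_not_differentiableAt hnd, hI0, smul_zero]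

end
end

section
/- Let p_0 be a strictly positive, continuously differentiable probability density on ℝ^d whose score s_0 = ∇ log p_0 is integrable against the OU posterior, such that p_t(y) is finite and positive, differentiation under the integral sign in y is valid, and integration by parts in x with vanishing boundary terms is valid. Then for every t > 0 and y ∈ ℝ^d the TSI and Tweedie representations of the time-t score agree: e^t ∫_{ℝ^d} s_0(x) p_{t|0}(x ∣ y) dx = −(1/(1−e^{−2t})) ∫_{ℝ^d} (y − e^{−t}x) p_{t|0}(x ∣ y) dx. -/
open MeasureTheory Real RealInnerProductSpace

noncomputable section

lemma aux_scalar (a v C K s : ℝ) (hv : v ≠ 0) :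
    a / v * (C * K) * s = C * (K * (-1 / (2 * v) * (-(a * s) + -(a * s)))) := by
  field_simp; ring

/-- The gradient of the OU kernel in its first (the `x`) variable. -/
lemma ouKernel_hasGradientAt (d : ℕ) (t : ℝ) (ht : 0 < t)
    (y x : EuclideanSpace ℝ (Fin d)) :
    HasGradientAt (fun x' => ouKernel d t x' y)
      ((Real.exp (-t) / (1 - Real.exp (-2 * t)) * ouKernel d t x y)
        • (y - Real.exp (-t) • x)) x := by
  set a := Real.exp (-t) with ha
  set v := 1 - Real.exp (-2 * t) with hv
  have hv0 : 0 < v := by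
    have : Real.exp (-2 * t) < 1 := by
      rw [Real.exp_lt_one_iff]; nlinarith
    simpa [hv] using this
  set C : ℝ := (2 * π * v) ^ (-(d : ℝ) / 2) with hC
  have hw : HasFDerivAt (fun x' : EuclideanSpace ℝ (Fin d) => y - a • x')
      (-(a • ContinuousLinearMap.id ℝ (EuclideanSpace ℝ (Fin d)))) x :=
    ((hasFDerivAt_id x).const_smul a).const_sub y
  have hg : HasFDerivAt (fun x' : EuclideanSpace ℝ (Fin d) => ⟪y - a • x', y - a • x'⟫)
      ((fderivInnerCLM ℝ (y - a • x, y - a • x)).comp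
        ((-(a • ContinuousLinearMap.id ℝ (EuclideanSpace ℝ (Fin d)))).prod
          (-(a • ContinuousLinearMap.id ℝ (EuclideanSpace ℝ (Fin d)))))) x :=
    hw.inner ℝ hw
  have hfun : (fun x' => ouKernel d t x' y)
      = fun x' => C * Real.exp (-1 / (2 * v) * ⟪y - a • x', y - a • x'⟫) := by
    funext x'
    rw [ouKernel]
    congr 2
    rw [real_inner_self_eq_norm_sq, ← hv]
    ring
  have hD := (((hg.const_mul (-1 / (2 * v))).exp).const_mul C)
  rw [hasGradientAt_iff_hasFDerivAt, hfun]
  convert hD using 1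
  · ext; rfl
  ext u
  simp only [InnerProductSpace.toDual_apply_apply, ContinuousLinearMap.coe_smul',
    Pi.smul_apply, ContinuousLinearMap.coe_comp', Function.comp_apply,
    ContinuousLinearMap.prod_apply, ContinuousLinearMap.neg_apply,
    ContinuousLinearMap.smul_apply, ContinuousLinearMap.coe_id', id_eq,
    fderivInnerCLM_apply, smul_eq_mul]
  rw [real_inner_smul_left, congrFun hfun x]
  have h2 : ⟪y - a • x, -(a • u)⟫ = -(a * ⟪y - a • x, u⟫) := by
    rw [inner_neg_right, real_inner_smul_right]
  have h3 : ⟪-(a • u), y - a • x⟫ = -(a * ⟪y - a • x, u⟫) := by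
    rw [inner_neg_left, real_inner_smul_left, real_inner_comm]
  rw [h2, h3]
  exact aux_scalar a v C _ _ hv0.ne'

/-- **TSI and Tweedie representations agree.** If `p₀` is a strictly positive `C¹` probability
density whose score `s₀ = ∇ log p₀` is integrable against the OU posterior, `p_t(y)` is finite
and positive, differentiation under the integral sign in `y` is valid, and integration by parts
in `x` with vanishing boundary terms is valid, then for every `t > 0` and `y`,
`e^t ∫ s₀(x) p_{t|0}(x ∣ y) dx = −(1/(1−e^{−2t})) ∫ (y − e^{−t}x) p_{t|0}(x ∣ y) dx`. -/
theorem tsi_eq_tweedie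
    (d : ℕ) (p0 : EuclideanSpace ℝ (Fin d) → ℝ)
    (hp0_pos : ∀ x, 0 < p0 x)
    (hp0_smooth : ContDiff ℝ 1 p0)
    (hp0_prob : ∫ x, p0 x = 1)
    -- the score `s₀ = ∇ log p₀` is integrable against the OU posterior
    (h_score_int : ∀ t, 0 < t → ∀ y, Integrable (fun x =>
        ouPosterior d t p0 x y • gradient (fun z => Real.log (p0 z)) x))
    -- the time-`t` marginal is finite and positive
    (h_marg_int : ∀ t, 0 < t → ∀ y, Integrable (fun x => ouKernel d t x y * p0 x))
    (h_marg_pos : ∀ t, 0 < t → ∀ y, 0 < ouMarginal d t p0 y)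
    -- differentiation under the integral sign in `y` is valid
    (h_swap : ∀ t, 0 < t → ∀ y, gradient (fun y' => ouMarginal d t p0 y') y
        = ∫ x, gradient (fun y' => ouKernel d t x y' * p0 x) y)
    -- integration by parts in `x` with vanishing boundary terms is valid
    (h_ibp : ∀ t, 0 < t → ∀ y, (∫ x, p0 x • gradient (fun x' => ouKernel d t x' y) x)
        = - ∫ x, (ouKernel d t x y * p0 x) • gradient (fun z => Real.log (p0 z)) x)
    (h_post_int : ∀ t, 0 < t → ∀ y, Integrable (fun x =>
        ouPosterior d t p0 x y • (y - Real.exp (-t) • x))) :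
    ∀ t, 0 < t → ∀ y,
      Real.exp t • ∫ x, ouPosterior d t p0 x y • gradient (fun z => Real.log (p0 z)) x
        = -(1 / (1 - Real.exp (-2 * t)))
            • ∫ x, ouPosterior d t p0 x y • (y - Real.exp (-t) • x) := by
  intro t ht y
  set a := Real.exp (-t) with ha
  set v := 1 - Real.exp (-2 * t) with hv
  have hv0 : 0 < v := by
    have : Real.exp (-2 * t) < 1 := by
      rw [Real.exp_lt_one_iff]; nlinarith
    simpa [hv] using this
  set M := ouMarginal d t p0 y with hM
  have hM0 : 0 < M := h_marg_pos t ht y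
  set I := ∫ x, ouPosterior d t p0 x y • (y - a • x) with hI
  set J := ∫ x, ouPosterior d t p0 x y • gradient (fun z => Real.log (p0 z)) x with hJdef
  have hgrad : ∀ x, gradient (fun x' => ouKernel d t x' y) x
      = (a / v * ouKernel d t x y) • (y - a • x) :=
    fun x => (ouKernel_hasGradientAt d t ht y x).gradient
  have key1 : (∫ x, p0 x • gradient (fun x' => ouKernel d t x' y) x)
      = (a / v * M) • I := by
    have hpt : ∀ x, p0 x • gradient (fun x' => ouKernel d t x' y) x
        = (a / v * M) • (ouPosterior d t p0 x y • (y - a • x)) := by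
      intro x
      rw [hgrad x, ouPosterior, ← hM, smul_smul, smul_smul]
      congr 1
      field_simp
    simp only [hpt]
    rw [integral_smul, hI]
  have key2 : (∫ x, (ouKernel d t x y * p0 x) • gradient (fun z => Real.log (p0 z)) x)
      = M • J := by
    rw [hJdef, ← integral_smul]
    congr 1
    funext x
    rw [smul_smul, ouPosterior, ← hM]
    congr 1
    field_simp
  have hibp := h_ibp t ht y
  rw [key1, key2] at hibp
  -- hibp : (a / v * M) • I = -(M • J)
  have hJ : J = (-(a / v)) • I := by
    have h1 : M • J = -((a / v * M) • I) := by rw [hibp, neg_neg]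
    calc J = M⁻¹ • (M • J) := by rw [smul_smul, inv_mul_cancel₀ hM0.ne', one_smul]
      _ = M⁻¹ • -((a / v * M) • I) := by rw [h1]
      _ = (-(a / v)) • I := by
          rw [smul_neg, smul_smul]
          congr 2
          field_simp
          rw [neg_smul]
  rw [hJ, smul_smul]
  congr 1
  have hea : Real.exp t * a = 1 := by rw [ha, ← Real.exp_add]; simp
  rw [mul_neg, ← mul_div_assoc, hea]
end
end

section
/- Fix t > 0, y ∈ ℝ^d, μ_0 ∈ ℝ^d, and a symmetric positive definite matrix Σ ∈ ℝ^{d×d}, and let s_0(x) = −Σ^{−1}(x − μ_0) (the score of the Gaussian density N(μ_0, Σ)). Let X_0^1, …, X_0^N be i.i.d. random vectors distributed according to N(μ_0, Σ), let μ̂ = Σ_i w̃_i X_0^i be the SNIS mean, μ = E[μ̂], and Δ = μ̂ − μ. Then the estimator deviations satisfy, almost surely, ε_C := ŝ_TSI(y,t) − E[ŝ_TSI(y,t)] = −e^t Σ^{−1} Δ and ε_T := ŝ_TWD(y,t) − E[ŝ_TWD(y,t)] = (e^{−t}/(1−e^{−2t})) Δ, and consequently E[ε_T^⊤ ε_C]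 = −(1/(1−e^{−2t})) E[Δ^⊤ Σ^{−1} Δ] ≤ 0, with equality if and only if Δ = 0 almost surely. -/
open MeasureTheory Real Matrix ProbabilityTheory

noncomputable section

/-- Normalized SNIS weight `w̃ᵢ = wᵢ / ∑ⱼ wⱼ` with `wᵢ = p_{t|0}(y ∣ x₀ⁱ)`. -/
def snisWeight (d N : ℕ) (t : ℝ) (y : EuclideanSpace ℝ (Fin d))
    (xs : Fin N → EuclideanSpace ℝ (Fin d)) (i : Fin N) : ℝ :=
  ouKernel d t (xs i) y / ∑ j, ouKernel d t (xs j) y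

/-- The SNIS mean `μ̂ = ∑ᵢ w̃ᵢ x₀ⁱ`. -/
def snisMean (d N : ℕ) (t : ℝ) (y : EuclideanSpace ℝ (Fin d))
    (xs : Fin N → EuclideanSpace ℝ (Fin d)) : EuclideanSpace ℝ (Fin d) :=
  ∑ i, snisWeight d N t y xs i • xs i

/-- The nonparametric TSI estimator `ŝ_TSI(y,t) = e^t ∑ᵢ w̃ᵢ s₀(x₀ⁱ)`. -/
def tsiEstimator (d N : ℕ) (t : ℝ) (y : EuclideanSpace ℝ (Fin d))
    (s0 : EuclideanSpace ℝ (Fin d) → EuclideanSpace ℝ (Fin d))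
    (xs : Fin N → EuclideanSpace ℝ (Fin d)) : EuclideanSpace ℝ (Fin d) :=
  Real.exp t • ∑ i, snisWeight d N t y xs i • s0 (xs i)

/-- The nonparametric Tweedie estimator
`ŝ_TWD(y,t) = −(1/(1−e^{−2t})) ∑ᵢ w̃ᵢ (y − e^{−t} x₀ⁱ)`. -/
def tweedieEstimator (d N : ℕ) (t : ℝ) (y : EuclideanSpace ℝ (Fin d))
    (xs : Fin N → EuclideanSpace ℝ (Fin d)) : EuclideanSpace ℝ (Fin d) :=
  -(1 / (1 - Real.exp (-2 * t))) • ∑ i, snisWeight d N t y xs i • (y - Real.exp (-t) • xs i)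

/-- The `d`-dimensional Gaussian density `N(x; μ, Σ)`. -/
def gaussDensity (d : ℕ) (μ : EuclideanSpace ℝ (Fin d)) (S : Matrix (Fin d) (Fin d) ℝ)
    (x : EuclideanSpace ℝ (Fin d)) : ℝ :=
  (2 * π) ^ (-(d : ℝ) / 2) * S.det ^ (-(1 : ℝ) / 2) *
    Real.exp (-(1 / 2) * dotProduct (x - μ) (S⁻¹.mulVec (x - μ)))

/-! ### Auxiliary lemmas -/

section Aux

lemma continuous_quadForm' {d : ℕ} (M : Matrix (Fin d) (Fin d) ℝ) :
    Continuous fun v : EuclideanSpace ℝ (Fin d) => dotProduct v (M.mulVec v) := by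
  have : ∀ v : EuclideanSpace ℝ (Fin d),
      dotProduct v (M.mulVec v) = ∑ i, v i * ∑ j, M i j * v j := by
    intro v; rfl
  simp only [this]; fun_prop

lemma quad_smul' {d : ℕ} (M : Matrix (Fin d) (Fin d) ℝ) (a : ℝ) (v : EuclideanSpace ℝ (Fin d)) :
    dotProduct (a • v) (M.mulVec (a • v)) = a ^ 2 * dotProduct v (M.mulVec v) := by
  have h : M.mulVec (a • v) = a • M.mulVec v := by rw [Matrix.mulVec_smul]
  rw [h, WithLp.ofLp_smul, smul_dotProduct, dotProduct_smul, smul_eq_mul, smul_eq_mul]; ring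

lemma posdef_quad_lb' {d : ℕ} {M : Matrix (Fin d) (Fin d) ℝ} (hM : M.PosDef) :
    ∃ c : ℝ, 0 < c ∧ ∀ x : EuclideanSpace ℝ (Fin d),
      c * ‖x‖ ^ 2 ≤ dotProduct x (M.mulVec x) := by
  rcases Nat.eq_zero_or_pos d with hd | hd
  · refine ⟨1, one_pos, fun x => ?_⟩
    subst hd
    have hx : x = 0 := Subsingleton.elim x 0
    simp [hx, dotProduct]
  · set f : EuclideanSpace ℝ (Fin d) → ℝ := fun v => dotProduct v (M.mulVec v) with hf
    have hcont : Continuous f := continuous_quadForm' M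
    have hne : (Metric.sphere (0 : EuclideanSpace ℝ (Fin d)) 1).Nonempty := by
      refine ⟨EuclideanSpace.single (⟨0, hd⟩ : Fin d) (1 : ℝ), ?_⟩
      simp [EuclideanSpace.norm_single]
    obtain ⟨z, hz, hzmin⟩ :=
      (isCompact_sphere (0 : EuclideanSpace ℝ (Fin d)) 1).exists_isMinOn hne hcont.continuousOn
    have hz1 : ‖z‖ = 1 := by simpa using hz
    have hzne : z ≠ 0 := by intro h; rw [h] at hz1; simp at hz1
    have hcpos : 0 < f z := by
      have := hM.dotProduct_mulVec_pos (x := z.ofLp) (fun h => hzne (by simpa using congrArg (WithLp.toLp 2) h))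
      simpa [hf, star_trivial] using this
    refine ⟨f z, hcpos, fun x => ?_⟩
    rcases eq_or_ne x 0 with rfl | hx
    · simp [hf, dotProduct]
    · have hxn : (0:ℝ) < ‖x‖ := norm_pos_iff.mpr hx
      set u : EuclideanSpace ℝ (Fin d) := ‖x‖⁻¹ • x with hu
      have hus : u ∈ Metric.sphere (0 : EuclideanSpace ℝ (Fin d)) 1 := by
        simp [hu, norm_smul, abs_of_nonneg (inv_nonneg.mpr hxn.le), inv_mul_cancel₀ hxn.ne']
      have h1 : f z ≤ f u := hzmin hus
      have h2 : f x = ‖x‖ ^ 2 * f u := by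
        have : x = ‖x‖ • u := by rw [hu, smul_smul, mul_inv_cancel₀ hxn.ne', one_smul]
        rw [hf]
        conv_lhs => rw [this]
        exact quad_smul' M ‖x‖ u
      show f z * ‖x‖ ^ 2 ≤ f x
      rw [h2]
      have := mul_le_mul_of_nonneg_left h1 (by positivity : (0:ℝ) ≤ ‖x‖ ^ 2)
      linarith

lemma integrable_exp_norm' {d : ℕ} {b : ℝ} (hb : 0 < b) :
    MeasureTheory.Integrable fun x : EuclideanSpace ℝ (Fin d) => Real.exp (-b * ‖x‖ ^ 2) := by
  have h := (GaussianFourier.integrable_cexp_neg_mul_sq_norm_add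
    (V := EuclideanSpace ℝ (Fin d)) (b := (b : ℂ)) (by simpa using hb) 0 0).norm
  refine h.congr (Filter.Eventually.of_forall fun x => ?_)
  simp [Complex.norm_exp, ← Complex.ofReal_pow]

lemma integrable_sq_exp_norm' {d : ℕ} {b : ℝ} (hb : 0 < b) :
    MeasureTheory.Integrable
      fun x : EuclideanSpace ℝ (Fin d) => ‖x‖ ^ 2 * Real.exp (-b * ‖x‖ ^ 2) := by
  have hb2 : 0 < b / 2 := by linarith
  refine (integrable_exp_norm' hb2).const_mul (2 / b) |>.mono' ?_ ?_
  · exact (((continuous_norm.pow 2).mul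
      ((continuous_const.mul (continuous_norm.pow 2)).rexp)).aestronglyMeasurable)
  · refine Filter.Eventually.of_forall fun x => ?_
    have key : ‖x‖ ^ 2 * Real.exp (-(b / 2) * ‖x‖ ^ 2) ≤ 2 / b := by
      have h1 : (b / 2) * ‖x‖ ^ 2 ≤ Real.exp ((b / 2) * ‖x‖ ^ 2) :=
        le_trans (by linarith [Real.add_one_le_exp ((b / 2) * ‖x‖ ^ 2)]) le_rfl
      have h2 : 0 < Real.exp ((b / 2) * ‖x‖ ^ 2) := Real.exp_pos _
      rw [neg_mul, Real.exp_neg]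
      rw [mul_inv_le_iff₀ h2]
      calc ‖x‖ ^ 2 = (2 / b) * ((b / 2) * ‖x‖ ^ 2) := by field_simp
        _ ≤ (2 / b) * Real.exp ((b / 2) * ‖x‖ ^ 2) := by
            apply mul_le_mul_of_nonneg_left h1 (by positivity)
    have hsplit : -b * ‖x‖ ^ 2 = -(b/2) * ‖x‖ ^ 2 + -(b/2) * ‖x‖ ^ 2 := by ring
    rw [Real.norm_eq_abs, abs_of_nonneg (by positivity), hsplit, Real.exp_add, ← mul_assoc]
    exact mul_le_mul_of_nonneg_right key (Real.exp_pos _).le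

end Aux

section Aux2

lemma gaussDensity_nonneg' {d : ℕ} (μ0 : EuclideanSpace ℝ (Fin d))
    (S : Matrix (Fin d) (Fin d) ℝ) (hS : S.PosDef) (x : EuclideanSpace ℝ (Fin d)) :
    0 ≤ gaussDensity d μ0 S x := by
  unfold gaussDensity
  have h1 : (0:ℝ) ≤ (2 * π) ^ (-(d : ℝ) / 2) := Real.rpow_nonneg (by positivity) _
  have h2 : (0:ℝ) ≤ S.det ^ (-(1 : ℝ) / 2) := Real.rpow_nonneg hS.det_pos.le _
  positivity

lemma continuous_gaussDensity' {d : ℕ} (μ0 : EuclideanSpace ℝ (Fin d))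
    (S : Matrix (Fin d) (Fin d) ℝ) : Continuous (gaussDensity d μ0 S) := by
  unfold gaussDensity
  exact continuous_const.mul
    (((continuous_const.mul
      ((continuous_quadForm' S⁻¹).comp (continuous_id.sub continuous_const)))).rexp)

lemma gauss_integrable' {d : ℕ} (μ0 : EuclideanSpace ℝ (Fin d))
    (S : Matrix (Fin d) (Fin d) ℝ) (hS : S.PosDef) :
    MeasureTheory.Integrable (gaussDensity d μ0 S) ∧
    MeasureTheory.Integrable
      (fun x : EuclideanSpace ℝ (Fin d) => ‖x‖ ^ 2 * gaussDensity d μ0 S x) := by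
  obtain ⟨c, hc, hq⟩ := posdef_quad_lb' hS.inv
  set C : ℝ := (2 * π) ^ (-(d : ℝ) / 2) * S.det ^ (-(1 : ℝ) / 2) with hC
  have hCpos : 0 ≤ C := mul_nonneg (Real.rpow_nonneg (by positivity) _)
    (Real.rpow_nonneg hS.det_pos.le _)
  have hc2 : 0 < c / 2 := by linarith
  have hbound : ∀ x : EuclideanSpace ℝ (Fin d),
      gaussDensity d μ0 S x ≤ C * Real.exp (-(c/2) * ‖x - μ0‖ ^ 2) := by
    intro x
    unfold gaussDensity
    rw [← hC]
    apply mul_le_mul_of_nonneg_left _ hCpos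
    apply Real.exp_le_exp.mpr
    have := hq (x - μ0)
    simp only [WithLp.ofLp_sub] at this ⊢
    nlinarith
  constructor
  · refine MeasureTheory.Integrable.mono'
      (((integrable_exp_norm' hc2).const_mul C).comp_sub_right μ0)
      (continuous_gaussDensity' μ0 S).aestronglyMeasurable
      (Filter.Eventually.of_forall fun x => ?_)
    rw [Real.norm_eq_abs, abs_of_nonneg (gaussDensity_nonneg' μ0 S hS x)]
    exact hbound x
  · refine MeasureTheory.Integrable.mono'
      ((((integrable_sq_exp_norm' hc2).const_mul (2*C)).add
        ((integrable_exp_norm' hc2).const_mul (2*C*‖μ0‖^2))).comp_sub_right μ0)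
      ((continuous_norm.pow 2).mul (continuous_gaussDensity' μ0 S)).aestronglyMeasurable
      (Filter.Eventually.of_forall fun x => ?_)
    simp only [Pi.add_apply]
    rw [Real.norm_eq_abs, abs_of_nonneg
      (mul_nonneg (by positivity) (gaussDensity_nonneg' μ0 S hS x))]
    have h1 : ‖x‖ ^ 2 ≤ 2 * ‖x - μ0‖ ^ 2 + 2 * ‖μ0‖ ^ 2 := by
      have := norm_sub_norm_le x μ0
      have h0 : ‖x‖ ≤ ‖x - μ0‖ + ‖μ0‖ := by linarith
      nlinarith [sq_nonneg (‖x - μ0‖ - ‖μ0‖), mul_self_le_mul_self (norm_nonneg x) h0,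
        sq_abs (‖x‖), norm_nonneg x]
    have h2 := hbound x
    have h3 : (0:ℝ) ≤ Real.exp (-(c/2) * ‖x - μ0‖ ^ 2) := (Real.exp_pos _).le
    have h4 : 0 ≤ gaussDensity d μ0 S x := gaussDensity_nonneg' μ0 S hS x
    calc ‖x‖ ^ 2 * gaussDensity d μ0 S x
        ≤ (2 * ‖x - μ0‖ ^ 2 + 2 * ‖μ0‖ ^ 2) * (C * Real.exp (-(c/2) * ‖x - μ0‖ ^ 2)) := by
          nlinarith
      _ = 2*C * (‖x - μ0‖ ^ 2 * Real.exp (-(c/2) * ‖x - μ0‖ ^ 2))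
          + 2*C*‖μ0‖^2 * Real.exp (-(c/2) * ‖x - μ0‖ ^ 2) := by ring

lemma oneSubExp_pos' {t : ℝ} (ht : 0 < t) : 0 < 1 - Real.exp (-2 * t) := by
  have : Real.exp (-2 * t) < 1 := Real.exp_lt_one_iff.mpr (by linarith)
  linarith

lemma ouKernel_pos' {d : ℕ} {t : ℝ} (ht : 0 < t) (x y : EuclideanSpace ℝ (Fin d)) :
    0 < ouKernel d t x y := by
  unfold ouKernel
  have h1 : 0 < 2 * π * (1 - Real.exp (-2 * t)) := by
    have := oneSubExp_pos' ht
    positivity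
  exact mul_pos (Real.rpow_pos_of_pos h1 _) (Real.exp_pos _)

lemma ouKernel_sum_pos' {d N : ℕ} {t : ℝ} (ht : 0 < t) (hN : 0 < N)
    (y : EuclideanSpace ℝ (Fin d)) (xs : Fin N → EuclideanSpace ℝ (Fin d)) :
    0 < ∑ j, ouKernel d t (xs j) y :=
  Finset.sum_pos (fun j _ => ouKernel_pos' ht _ _)
    (by simp [Finset.univ_nonempty_iff, Fin.pos_iff_nonempty.mp hN])

lemma snisWeight_nonneg' {d N : ℕ} {t : ℝ} (ht : 0 < t) (hN : 0 < N)
    (y : EuclideanSpace ℝ (Fin d)) (xs : Fin N → EuclideanSpace ℝ (Fin d)) (i : Fin N) :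
    0 ≤ snisWeight d N t y xs i := by
  unfold snisWeight
  exact div_nonneg (ouKernel_pos' ht _ _).le (ouKernel_sum_pos' ht hN y xs).le

lemma snisWeight_sum_one' {d N : ℕ} {t : ℝ} (ht : 0 < t) (hN : 0 < N)
    (y : EuclideanSpace ℝ (Fin d)) (xs : Fin N → EuclideanSpace ℝ (Fin d)) :
    ∑ i, snisWeight d N t y xs i = 1 := by
  unfold snisWeight
  rw [← Finset.sum_div, div_self (ouKernel_sum_pos' ht hN y xs).ne']

lemma continuous_snisMean' {d N : ℕ} {t : ℝ} (ht : 0 < t) (hN : 0 < N)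
    (y : EuclideanSpace ℝ (Fin d)) :
    Continuous fun xs : Fin N → EuclideanSpace ℝ (Fin d) => snisMean d N t y xs := by
  have hker : ∀ i : Fin N,
      Continuous fun xs : Fin N → EuclideanSpace ℝ (Fin d) => ouKernel d t (xs i) y := by
    intro i
    unfold ouKernel
    fun_prop
  have hw : ∀ i : Fin N,
      Continuous fun xs : Fin N → EuclideanSpace ℝ (Fin d) => snisWeight d N t y xs i := by
    intro i
    unfold snisWeight
    exact (hker i).div (continuous_finset_sum _ fun j _ => hker j)
      (fun xs => (ouKernel_sum_pos' ht hN y xs).ne')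
  unfold snisMean
  exact continuous_finset_sum _ fun i _ => (hw i).smul (continuous_apply i)

lemma norm_snisMean_le' {d N : ℕ} {t : ℝ} (ht : 0 < t) (hN : 0 < N)
    (y : EuclideanSpace ℝ (Fin d)) (xs : Fin N → EuclideanSpace ℝ (Fin d)) :
    ‖snisMean d N t y xs‖ ≤ ∑ i, ‖xs i‖ := by
  unfold snisMean
  refine (norm_sum_le _ _).trans (Finset.sum_le_sum fun i _ => ?_)
  rw [norm_smul, Real.norm_eq_abs, abs_of_nonneg (snisWeight_nonneg' ht hN y xs i)]
  have hle : snisWeight d N t y xs i ≤ 1 := by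
    rw [← snisWeight_sum_one' ht hN y xs]
    exact Finset.single_le_sum (fun j _ => snisWeight_nonneg' ht hN y xs j) (Finset.mem_univ i)
  nlinarith [norm_nonneg (xs i), snisWeight_nonneg' ht hN y xs i]

lemma sum_smul_affine' {d N : ℕ} (w : Fin N → ℝ) (hw : ∑ i, w i = 1)
    (L : EuclideanSpace ℝ (Fin d) →L[ℝ] EuclideanSpace ℝ (Fin d))
    (μ0 : EuclideanSpace ℝ (Fin d)) (xs : Fin N → EuclideanSpace ℝ (Fin d)) :
    ∑ i, w i • (-(L (xs i - μ0))) = L μ0 - L (∑ i, w i • xs i) := by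
  rw [map_sum]
  simp only [map_sub, smul_sub, smul_neg, neg_sub, _root_.map_smul]
  rw [Finset.sum_sub_distrib, ← Finset.sum_smul, hw, one_smul]

lemma sum_smul_affine2' {d N : ℕ} (w : Fin N → ℝ) (hw : ∑ i, w i = 1) (a : ℝ)
    (y : EuclideanSpace ℝ (Fin d)) (xs : Fin N → EuclideanSpace ℝ (Fin d)) :
    ∑ i, w i • (y - a • xs i) = y - a • (∑ i, w i • xs i) := by
  simp only [smul_sub, Finset.sum_sub_distrib, ← Finset.sum_smul, hw, one_smul, Finset.smul_sum]
  congr 1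
  exact Finset.sum_congr rfl fun i _ => smul_comm (w i) a (xs i)

lemma inner_eq_dotProduct' {d : ℕ} (u v : EuclideanSpace ℝ (Fin d)) :
    inner (𝕜 := ℝ) u v = dotProduct u v := by
  simp [PiLp.inner_apply, RCLike.inner_apply, dotProduct, mul_comm]

lemma sample_integrable' {d : ℕ} (Ω : Type) [MeasureSpace Ω]
    [IsProbabilityMeasure (volume : Measure Ω)]
    (g : EuclideanSpace ℝ (Fin d) → ℝ) (hg : Continuous g) (hgnn : ∀ x, 0 ≤ g x)
    (hgi2 : MeasureTheory.Integrable (fun x : EuclideanSpace ℝ (Fin d) => ‖x‖ ^ 2 * g x))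
    (Y : Ω → EuclideanSpace ℝ (Fin d)) (hY : Measurable Y)
    (hlaw : Measure.map Y volume = volume.withDensity (fun x => ENNReal.ofReal (g x))) :
    MeasureTheory.Integrable (fun ω => ‖Y ω‖ ^ 2) (volume : Measure Ω) ∧
    MeasureTheory.Integrable Y (volume : Measure Ω) := by
  have hgm : Measurable fun x : EuclideanSpace ℝ (Fin d) => ENNReal.ofReal (g x) :=
    hg.measurable.ennreal_ofReal
  have hlt : ∀ᵐ x : EuclideanSpace ℝ (Fin d), ENNReal.ofReal (g x) < ⊤ :=
    Filter.Eventually.of_forall fun x => ENNReal.ofReal_lt_top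
  have key : ∀ (f : EuclideanSpace ℝ (Fin d) → ℝ), Continuous f →
      MeasureTheory.Integrable (fun x => f x * g x)
        (volume : Measure (EuclideanSpace ℝ (Fin d))) →
      MeasureTheory.Integrable (fun ω => f (Y ω)) (volume : Measure Ω) := by
    intro f hf hfi
    have h1 : MeasureTheory.Integrable f (Measure.map Y volume) := by
      rw [hlaw, MeasureTheory.integrable_withDensity_iff hgm hlt]
      refine hfi.congr (Filter.Eventually.of_forall fun x => ?_)
      simp [ENNReal.toReal_ofReal (hgnn x)]
    exact (MeasureTheory.integrable_map_measure hf.aestronglyMeasurable hY.aemeasurable).mp h1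
  have h2 : MeasureTheory.Integrable (fun ω => ‖Y ω‖ ^ 2) (volume : Measure Ω) :=
    key (fun x => ‖x‖ ^ 2) (continuous_norm.pow 2) hgi2
  refine ⟨h2, ?_⟩
  refine MeasureTheory.Integrable.mono'
    ((MeasureTheory.integrable_const (1:ℝ)).add h2) hY.aestronglyMeasurable
    (Filter.Eventually.of_forall fun ω => ?_)
  simp only [Pi.add_apply, Pi.one_apply]
  nlinarith [norm_nonneg (Y ω), sq_nonneg (‖Y ω‖ - 1)]

end Aux2


set_option maxHeartbeats 1600000 in
/-- **Gaussian case: exact anticorrelation.** For an i.i.d. Gaussian reference sample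
`X₀¹, …, X₀ᴺ ~ N(μ₀, Σ)` with score `s₀(x) = −Σ⁻¹(x − μ₀)`, the deviations of the SNIS
TSI and Tweedie estimators satisfy `ε_C = −e^t Σ⁻¹ Δ` and `ε_T = (e^{−t}/(1−e^{−2t})) Δ`
almost surely, where `Δ = μ̂ − E[μ̂]`, and hence
`E[ε_T^⊤ ε_C] = −(1/(1−e^{−2t})) E[Δ^⊤ Σ^{−1} Δ] ≤ 0`, with equality iff `Δ = 0` a.s. -/
theorem gaussian_exact_anticorrelation
    (d N : ℕ) (hN : 0 < N) (t : ℝ) (ht : 0 < t)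
    (y μ0 : EuclideanSpace ℝ (Fin d))
    (S : Matrix (Fin d) (Fin d) ℝ) (hS : S.PosDef)
    (Ω : Type) [MeasureSpace Ω] [IsProbabilityMeasure (volume : Measure Ω)]
    (X : Fin N → Ω → EuclideanSpace ℝ (Fin d))
    (hXmeas : ∀ i, Measurable (X i))
    -- each `X₀ⁱ` is distributed according to `N(μ₀, Σ)`
    (hXlaw : ∀ i, Measure.map (X i) volume
        = volume.withDensity (fun x => ENNReal.ofReal (gaussDensity d μ0 S x)))
    -- the sample is independent
    (hXindep : iIndepFun X volume) :
    letI μhat : Ω → EuclideanSpace ℝ (Fin d) := fun ω => snisMean d N t y (fun i => X i ω)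
    letI μbar : EuclideanSpace ℝ (Fin d) := ∫ ω, μhat ω
    letI Δ : Ω → EuclideanSpace ℝ (Fin d) := fun ω => μhat ω - μbar
    letI sTSI : Ω → EuclideanSpace ℝ (Fin d) := fun ω =>
      tsiEstimator d N t y (fun x => (WithLp.toLp 2 (-(S⁻¹.mulVec (x - μ0))) : EuclideanSpace ℝ (Fin d)))
        (fun i => X i ω)
    letI sTWD : Ω → EuclideanSpace ℝ (Fin d) := fun ω =>
      tweedieEstimator d N t y (fun i => X i ω)
    letI εC : Ω → EuclideanSpace ℝ (Fin d) := fun ω => sTSI ω - ∫ ω', sTSI ω'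
    letI εT : Ω → EuclideanSpace ℝ (Fin d) := fun ω => sTWD ω - ∫ ω', sTWD ω'
    (∀ᵐ ω ∂(volume : Measure Ω),
        εC ω = -(Real.exp t) • (WithLp.toLp 2 (S⁻¹.mulVec (Δ ω)) : EuclideanSpace ℝ (Fin d))
        ∧ εT ω = (Real.exp (-t) / (1 - Real.exp (-2 * t))) • Δ ω)
    ∧ (∫ ω, inner (𝕜 := ℝ) (εT ω) (εC ω))
        = -(1 / (1 - Real.exp (-2 * t)))
            * ∫ ω, dotProduct (Δ ω) (S⁻¹.mulVec (Δ ω))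
    ∧ (∫ ω, inner (𝕜 := ℝ) (εT ω) (εC ω)) ≤ 0
    ∧ ((∫ ω, inner (𝕜 := ℝ) (εT ω) (εC ω)) = 0
        ↔ ∀ᵐ ω ∂(volume : Measure Ω), Δ ω = 0) := by
  classical
  have hσ : (0:ℝ) < 1 - Real.exp (-2 * t) := oneSubExp_pos' ht
  set L : EuclideanSpace ℝ (Fin d) →L[ℝ] EuclideanSpace ℝ (Fin d) :=
    LinearMap.toContinuousLinearMap (Matrix.toEuclideanLin S⁻¹) with hLdef
  have hL : ∀ v : EuclideanSpace ℝ (Fin d),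
      L v = (WithLp.toLp 2 (S⁻¹.mulVec v) : EuclideanSpace ℝ (Fin d)) := fun v => rfl
  -- integrability of the sample
  have hXint : ∀ i, Integrable (fun ω => ‖X i ω‖ ^ 2) (volume : Measure Ω) ∧
      Integrable (X i) (volume : Measure Ω) := fun i =>
    sample_integrable' Ω (gaussDensity d μ0 S) (continuous_gaussDensity' μ0 S)
      (gaussDensity_nonneg' μ0 S hS) (gauss_integrable' μ0 S hS).2 (X i) (hXmeas i) (hXlaw i)
  -- measurability and integrability of the SNIS mean
  have hμmeas : Measurable (fun ω => snisMean d N t y (fun i => X i ω)) :=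
    (continuous_snisMean' ht hN y).measurable.comp
      (measurable_pi_lambda _ fun i => hXmeas i)
  have hIntμ : Integrable (fun ω => snisMean d N t y (fun i => X i ω)) (volume : Measure Ω) := by
    refine Integrable.mono'
      (MeasureTheory.integrable_finset_sum Finset.univ
        (fun i _ => ((integrable_const (1:ℝ)).add (hXint i).1)))
      hμmeas.aestronglyMeasurable (Filter.Eventually.of_forall fun ω => ?_)
    calc ‖snisMean d N t y fun i => X i ω‖
        ≤ ∑ i, ‖X i ω‖ := norm_snisMean_le' ht hN y _
      _ ≤ ∑ i, (1 + ‖X i ω‖ ^ 2) :=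
          Finset.sum_le_sum fun i _ => by nlinarith [sq_nonneg (‖X i ω‖ - 1)]
  have hIntμsq : Integrable (fun ω => ‖snisMean d N t y (fun i => X i ω)‖ ^ 2)
      (volume : Measure Ω) := by
    refine Integrable.mono'
      ((MeasureTheory.integrable_finset_sum Finset.univ (fun i _ => (hXint i).1)).const_mul
        (N : ℝ))
      ((hμmeas.norm.pow_const 2).aestronglyMeasurable)
      (Filter.Eventually.of_forall fun ω => ?_)
    have h1 := norm_snisMean_le' ht hN y (fun i => X i ω)
    have h2 : (∑ i, ‖X i ω‖) ^ 2 ≤ (N : ℝ) * ∑ i, ‖X i ω‖ ^ 2 := by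
      have := sq_sum_le_card_mul_sum_sq (s := (Finset.univ : Finset (Fin N)))
        (f := fun i => ‖X i ω‖)
      simpa using this
    have h3 : (0:ℝ) ≤ ∑ i, ‖X i ω‖ :=
      Finset.sum_nonneg fun i _ => norm_nonneg _
    rw [Real.norm_eq_abs, abs_of_nonneg (by positivity)]
    nlinarith [norm_nonneg (snisMean d N t y fun i => X i ω)]
  -- pointwise identity for the TSI estimator
  have hTSI : ∀ ω : Ω,
      tsiEstimator d N t y
        (fun x => (WithLp.toLp 2 (-(S⁻¹.mulVec (x - μ0))) : EuclideanSpace ℝ (Fin d))) (fun i => X i ω)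
      = Real.exp t • (L μ0 - L (snisMean d N t y (fun i => X i ω))) := by
    intro ω
    unfold tsiEstimator snisMean
    congr 1
    exact sum_smul_affine' _ (snisWeight_sum_one' ht hN y _) L μ0 (fun i => X i ω)
  have hITSI : (∫ ω, tsiEstimator d N t y
        (fun x => (WithLp.toLp 2 (-(S⁻¹.mulVec (x - μ0))) : EuclideanSpace ℝ (Fin d))) (fun i => X i ω))
      = Real.exp t • (L μ0 - L (∫ ω, snisMean d N t y fun i => X i ω)) := by
    simp only [hTSI]
    rw [integral_smul]
    congr 1
    rw [integral_sub (integrable_const _) (L.integrable_comp hIntμ),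
      L.integral_comp_comm hIntμ, integral_const, probReal_univ, one_smul]
  have hεC : ∀ ω : Ω,
      (tsiEstimator d N t y
        (fun x => (WithLp.toLp 2 (-(S⁻¹.mulVec (x - μ0))) : EuclideanSpace ℝ (Fin d))) (fun i => X i ω))
      - (∫ ω', tsiEstimator d N t y
          (fun x => (WithLp.toLp 2 (-(S⁻¹.mulVec (x - μ0))) : EuclideanSpace ℝ (Fin d))) (fun i => X i ω'))
      = -(Real.exp t) • L ((snisMean d N t y fun i => X i ω)
          - ∫ ω', snisMean d N t y fun i => X i ω') := by
    intro ω
    rw [hTSI ω, hITSI, map_sub]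
    module
  -- pointwise identity for the Tweedie estimator
  have hTWD : ∀ ω : Ω, tweedieEstimator d N t y (fun i => X i ω)
      = -(1 / (1 - Real.exp (-2 * t)))
          • (y - Real.exp (-t) • snisMean d N t y (fun i => X i ω)) := by
    intro ω
    unfold tweedieEstimator snisMean
    congr 1
    exact sum_smul_affine2' _ (snisWeight_sum_one' ht hN y _) _ y (fun i => X i ω)
  have hITWD : (∫ ω, tweedieEstimator d N t y (fun i => X i ω))
      = -(1 / (1 - Real.exp (-2 * t)))
          • (y - Real.exp (-t) • ∫ ω, snisMean d N t y fun i => X i ω) := by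
    simp only [hTWD]
    rw [integral_smul]
    congr 1
    have hsm : Integrable (fun ω => Real.exp (-t) • snisMean d N t y fun i => X i ω)
        (volume : Measure Ω) := hIntμ.smul (Real.exp (-t))
    rw [integral_sub (integrable_const _) hsm,
      integral_smul, integral_const, probReal_univ, one_smul]
  have hεT : ∀ ω : Ω,
      (tweedieEstimator d N t y (fun i => X i ω))
      - (∫ ω', tweedieEstimator d N t y (fun i => X i ω'))
      = (Real.exp (-t) / (1 - Real.exp (-2 * t)))
          • ((snisMean d N t y fun i => X i ω) - ∫ ω', snisMean d N t y fun i => X i ω') := by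
    intro ω
    rw [hTWD ω, hITWD]
    module
  -- pointwise inner product identity
  have hexp : Real.exp (-t) * Real.exp t = 1 := by
    rw [← Real.exp_add]; norm_num
  have hptw : ∀ ω : Ω, inner (𝕜 := ℝ)
      ((tweedieEstimator d N t y (fun i => X i ω))
        - (∫ ω', tweedieEstimator d N t y (fun i => X i ω')))
      ((tsiEstimator d N t y
          (fun x => (WithLp.toLp 2 (-(S⁻¹.mulVec (x - μ0))) : EuclideanSpace ℝ (Fin d))) (fun i => X i ω))
        - (∫ ω', tsiEstimator d N t y
            (fun x => (WithLp.toLp 2 (-(S⁻¹.mulVec (x - μ0))) : EuclideanSpace ℝ (Fin d))) (fun i => X i ω')))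
      = -(1 / (1 - Real.exp (-2 * t)))
          * dotProduct
              ((snisMean d N t y fun i => X i ω) - ∫ ω', snisMean d N t y fun i => X i ω')
              (S⁻¹.mulVec
                ((snisMean d N t y fun i => X i ω)
                  - ∫ ω', snisMean d N t y fun i => X i ω')) := by
    intro ω
    rw [hεT ω, hεC ω, real_inner_smul_left, real_inner_smul_right]
    have hid : inner (𝕜 := ℝ)
        ((snisMean d N t y fun i => X i ω) - ∫ ω', snisMean d N t y fun i => X i ω')
        (L ((snisMean d N t y fun i => X i ω) - ∫ ω', snisMean d N t y fun i => X i ω'))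
        = dotProduct
            ((snisMean d N t y fun i => X i ω) - ∫ ω', snisMean d N t y fun i => X i ω')
            (S⁻¹.mulVec
              ((snisMean d N t y fun i => X i ω)
                - ∫ ω', snisMean d N t y fun i => X i ω')) := inner_eq_dotProduct' _ _
    rw [hid]
    have h2 : Real.exp (-t) / (1 - Real.exp (-2 * t)) * -Real.exp t
        = -(1 / (1 - Real.exp (-2 * t))) := by
      rw [div_mul_eq_mul_div, mul_neg, hexp]
      ring
    rw [← mul_assoc, h2]
  -- nonnegativity of the quadratic form
  have hq0 : ∀ v : EuclideanSpace ℝ (Fin d), 0 ≤ dotProduct v (S⁻¹.mulVec v) := by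
    intro v
    have := hS.inv.posSemidef.dotProduct_mulVec_nonneg v.ofLp
    simpa [star_trivial] using this
  -- integrability of the quadratic form of Δ
  have hqint : Integrable (fun ω => dotProduct
      ((snisMean d N t y fun i => X i ω) - ∫ ω', snisMean d N t y fun i => X i ω')
      (S⁻¹.mulVec
        ((snisMean d N t y fun i => X i ω) - ∫ ω', snisMean d N t y fun i => X i ω')))
      (volume : Measure Ω) := by
    refine Integrable.mono'
      (((hIntμsq.const_mul 2).add (integrable_const
          (2 * ‖∫ ω', snisMean d N t y fun i => X i ω'‖ ^ 2))).const_mul ‖L‖)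
      (((continuous_quadForm' S⁻¹).measurable.comp
        (hμmeas.sub measurable_const)).aestronglyMeasurable)
      (Filter.Eventually.of_forall fun ω => ?_)
    set v : EuclideanSpace ℝ (Fin d) :=
      (snisMean d N t y fun i => X i ω) - ∫ ω', snisMean d N t y fun i => X i ω' with hv
    have h1 : dotProduct v (S⁻¹.mulVec v) = inner (𝕜 := ℝ) v (L v) :=
      (inner_eq_dotProduct' v (L v)).symm
    have h2 : |inner (𝕜 := ℝ) v (L v)| ≤ ‖v‖ * ‖L v‖ := abs_real_inner_le_norm v (L v)
    have h3 : ‖L v‖ ≤ ‖L‖ * ‖v‖ := L.le_opNorm v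
    have h4 : ‖v‖ ^ 2 ≤ 2 * ‖snisMean d N t y fun i => X i ω‖ ^ 2
        + 2 * ‖∫ ω', snisMean d N t y fun i => X i ω'‖ ^ 2 := by
      have h5 := norm_sub_le (snisMean d N t y fun i => X i ω)
        (∫ ω', snisMean d N t y fun i => X i ω')
      rw [hv]
      nlinarith [norm_nonneg v, norm_nonneg (snisMean d N t y fun i => X i ω),
        norm_nonneg (∫ ω', snisMean d N t y fun i => X i ω'),
        sq_nonneg (‖snisMean d N t y fun i => X i ω‖
          - ‖∫ ω', snisMean d N t y fun i => X i ω'‖)]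
    rw [Real.norm_eq_abs, ← WithLp.ofLp_sub, ← hv, h1]
    calc |inner (𝕜 := ℝ) v (L v)| ≤ ‖v‖ * ‖L v‖ := h2
      _ ≤ ‖v‖ * (‖L‖ * ‖v‖) := by nlinarith [norm_nonneg v, norm_nonneg (L v), L.opNorm_nonneg]
      _ = ‖L‖ * ‖v‖ ^ 2 := by ring
      _ ≤ ‖L‖ * (2 * ‖snisMean d N t y fun i => X i ω‖ ^ 2
            + 2 * ‖∫ ω', snisMean d N t y fun i => X i ω'‖ ^ 2) := by
          nlinarith [L.opNorm_nonneg]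
  -- assemble
  refine ⟨Filter.Eventually.of_forall fun ω => ⟨?_, hεT ω⟩, ?_, ?_, ?_⟩
  · exact hεC ω
  · -- the integral identity
    simp only [hptw]
    rw [MeasureTheory.integral_const_mul]
    rfl
  · -- nonpositivity
    simp only [hptw]
    rw [MeasureTheory.integral_const_mul]
    have hI : 0 ≤ ∫ ω, dotProduct
        ((snisMean d N t y fun i => X i ω) - ∫ ω', snisMean d N t y fun i => X i ω')
        (S⁻¹.mulVec
          ((snisMean d N t y fun i => X i ω)
            - ∫ ω', snisMean d N t y fun i => X i ω')) :=
      integral_nonneg fun ω => hq0 _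
    have hpos : (0:ℝ) < 1 / (1 - Real.exp (-2 * t)) := one_div_pos.mpr hσ
    nlinarith
  · -- equality iff Δ = 0 a.e.
    simp only [hptw]
    rw [MeasureTheory.integral_const_mul]
    have hpos : (0:ℝ) < 1 / (1 - Real.exp (-2 * t)) := one_div_pos.mpr hσ
    constructor
    · intro h
      have hI0 : (∫ ω, dotProduct
          ((snisMean d N t y fun i => X i ω) - ∫ ω', snisMean d N t y fun i => X i ω')
          (S⁻¹.mulVec
            ((snisMean d N t y fun i => X i ω)
              - ∫ ω', snisMean d N t y fun i => X i ω'))) = 0 := by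
        rcases mul_eq_zero.mp h with h1 | h1
        · exact absurd (neg_eq_zero.mp h1) hpos.ne'
        · exact h1
      have := (MeasureTheory.integral_eq_zero_iff_of_nonneg (fun ω => hq0 _) hqint).mp hI0
      filter_upwards [this] with ω hω
      by_contra hne
      have hgt := hS.inv.dotProduct_mulVec_pos (x := ((snisMean d N t y fun i => X i ω) - ∫ ω', snisMean d N t y fun i => X i ω').ofLp) (fun h => hne (by simpa using congrArg (WithLp.toLp 2) h))
      rw [star_trivial] at hgt
      simp only [Pi.zero_apply] at hω
      exact absurd hω (ne_of_gt hgt)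
    · intro h
      have hI0 : (∫ ω, dotProduct
          ((snisMean d N t y fun i => X i ω) - ∫ ω', snisMean d N t y fun i => X i ω')
          (S⁻¹.mulVec
            ((snisMean d N t y fun i => X i ω)
              - ∫ ω', snisMean d N t y fun i => X i ω'))) = 0 := by
        rw [integral_congr_ae (h.mono fun ω hω => ?_), integral_zero]
        rw [hω]
        exact zero_dotProduct _
      rw [hI0, mul_zero]


end
end

section
/- Fix y ∈ ℝ^d and t > 0. Let p_0 be a strictly positive, twice continuously differentiable probability density on ℝ^d with m I ⪯ −∇²_x log p_0(x) for all x ∈ ℝ^d, where m ∈ ℝ, and assume either m ≥ 0, or m < 0 and t < ½ log(1 − 1/m). Define κ = m + e^{−2t}/(1 − e^{−2t}). Then κ > 0 and the OU posterior density is κ-strongly log-concave in x: −∇²_x log p_{t|0}(x ∣ y) ⪰ κ I for all x ∈ ℝ^d. -/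
open MeasureTheory Real Matrix

noncomputable section

/-- The Hessian of `f : ℝ^d → ℝ` at `x`, as a `d × d` matrix. -/
def hessianMatrix (d : ℕ) (f : EuclideanSpace ℝ (Fin d) → ℝ)
    (x : EuclideanSpace ℝ (Fin d)) : Matrix (Fin d) (Fin d) ℝ :=
  Matrix.of fun i j =>
    iteratedFDeriv ℝ 2 f x ![EuclideanSpace.single i 1, EuclideanSpace.single j 1]

lemma quad_hasFDerivAt {d : ℕ} (y : EuclideanSpace ℝ (Fin d)) (a s : ℝ) (hs : s ≠ 0)
    (x : EuclideanSpace ℝ (Fin d)) :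
    HasFDerivAt (fun z : EuclideanSpace ℝ (Fin d) => -‖y - a • z‖ ^ 2 / (2 * s))
      ((a / s) • innerSL ℝ (y - a • x)) x := by
  have h1 : HasFDerivAt (fun z : EuclideanSpace ℝ (Fin d) => y - a • z)
      (-(a • ContinuousLinearMap.id ℝ (EuclideanSpace ℝ (Fin d)))) x :=
    ((hasFDerivAt_id x).const_smul a).const_sub y
  have h2 := h1.norm_sq
  have h3 := h2.const_mul (-(2 * s)⁻¹)
  have heq : (fun z : EuclideanSpace ℝ (Fin d) => -‖y - a • z‖ ^ 2 / (2 * s))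
      = fun z => -(2 * s)⁻¹ * ‖y - a • z‖ ^ 2 := by
    funext z; ring
  rw [heq]
  refine h3.congr_fderiv ?_
  ext v
  simp only [ContinuousLinearMap.smul_apply, innerSL_apply_apply, ContinuousLinearMap.coe_smul',
    Pi.smul_apply, ContinuousLinearMap.comp_apply, ContinuousLinearMap.neg_apply,
    ContinuousLinearMap.coe_id', id_eq, inner_neg_right, inner_smul_right, smul_eq_mul,
    nsmul_eq_mul]
  field_simp
  ring

lemma quad_hessian {d : ℕ} (y : EuclideanSpace ℝ (Fin d)) (a s : ℝ) (hs : s ≠ 0)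
    (x u v : EuclideanSpace ℝ (Fin d)) :
    iteratedFDeriv ℝ 2 (fun z : EuclideanSpace ℝ (Fin d) => -‖y - a • z‖ ^ 2 / (2 * s)) x ![u, v]
      = -(a ^ 2 / s) * (inner ℝ u v) := by
  rw [iteratedFDeriv_two_apply]
  have hd : (fderiv ℝ (fun z : EuclideanSpace ℝ (Fin d) => -‖y - a • z‖ ^ 2 / (2 * s)))
      = fun z => (a / s) • innerSL ℝ (y - a • z) :=
    funext fun z => (quad_hasFDerivAt y a s hs z).fderiv
  rw [hd]
  have h1 : HasFDerivAt (fun z : EuclideanSpace ℝ (Fin d) => y - a • z)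
      (-(a • ContinuousLinearMap.id ℝ (EuclideanSpace ℝ (Fin d)))) x :=
    ((hasFDerivAt_id x).const_smul a).const_sub y
  have h2 : HasFDerivAt (fun z : EuclideanSpace ℝ (Fin d) => (a / s) • innerSL ℝ (y - a • z))
      ((a / s) • (((innerSL ℝ : EuclideanSpace ℝ (Fin d) →L[ℝ] _)).comp
        (-(a • ContinuousLinearMap.id ℝ (EuclideanSpace ℝ (Fin d)))))) x :=
    ((innerSL ℝ).hasFDerivAt.comp x h1).const_smul (a / s)
  rw [h2.fderiv]
  show ((a / s) • (innerSL ℝ (-(a • u)))) v = _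
  simp only [ContinuousLinearMap.smul_apply, innerSL_apply_apply, inner_neg_left, inner_smul_left,
    smul_eq_mul, RCLike.conj_to_real, map_neg, Pi.neg_apply, ContinuousLinearMap.neg_apply,
    real_inner_smul_left]
  ring

lemma quadC_hessian {d : ℕ} (y : EuclideanSpace ℝ (Fin d)) (a s C : ℝ) (hs : s ≠ 0)
    (x u v : EuclideanSpace ℝ (Fin d)) :
    iteratedFDeriv ℝ 2 (fun z : EuclideanSpace ℝ (Fin d) => -‖y - a • z‖ ^ 2 / (2 * s) + C)
      x ![u, v] = -(a ^ 2 / s) * (inner ℝ u v) := by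
  rw [iteratedFDeriv_two_apply]
  have hd : (fderiv ℝ (fun z : EuclideanSpace ℝ (Fin d) => -‖y - a • z‖ ^ 2 / (2 * s) + C))
      = fderiv ℝ (fun z : EuclideanSpace ℝ (Fin d) => -‖y - a • z‖ ^ 2 / (2 * s)) :=
    funext fun z => fderiv_add_const C
  rw [hd, ← iteratedFDeriv_two_apply]
  exact quad_hessian y a s hs x u v

/-- **Strong log-concavity of the OU posterior for small time.** If
`m I ⪯ −∇²_x log p₀(x)` for all `x` and either `m ≥ 0`, or `m < 0` and
`t < ½ log(1 − 1/m)`, then `κ = m + e^{−2t}/(1 − e^{−2t}) > 0` and the OU posterior is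
`κ`-strongly log-concave in `x`: `−∇²_x log p_{t|0}(x ∣ y) ⪰ κ I` for all `x`. -/
theorem ou_posterior_strong_logconcavity
    (d : ℕ) (y : EuclideanSpace ℝ (Fin d)) (t : ℝ) (ht : 0 < t)
    (p0 : EuclideanSpace ℝ (Fin d) → ℝ)
    (hp0_pos : ∀ x, 0 < p0 x)
    (hp0_smooth : ContDiff ℝ 2 p0)
    (hp0_prob : ∫ x, p0 x = 1)
    -- `p_t(y)` is finite and positive
    (h_marg_int : Integrable (fun x => ouKernel d t x y * p0 x))
    (h_marg_pos : 0 < ouMarginal d t p0 y)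
    (m : ℝ)
    -- `m I ⪯ −∇²_x log p₀(x)` for all `x`
    (hHess : ∀ x, ((-(hessianMatrix d (fun z => Real.log (p0 z)) x))
        - m • (1 : Matrix (Fin d) (Fin d) ℝ)).PosSemidef)
    (hm : 0 ≤ m ∨ (m < 0 ∧ t < (1 / 2) * Real.log (1 - 1 / m))) :
    letI κ : ℝ := m + Real.exp (-2 * t) / (1 - Real.exp (-2 * t))
    0 < κ ∧ ∀ x, ((-(hessianMatrix d (fun z => Real.log (ouPosterior d t p0 z y)) x))
        - κ • (1 : Matrix (Fin d) (Fin d) ℝ)).PosSemidef := by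
  have hs_pos : (0:ℝ) < 1 - Real.exp (-2 * t) := by
    have : Real.exp (-2 * t) < 1 := Real.exp_lt_one_iff.mpr (by linarith)
    linarith
  have hs : (1 - Real.exp (-2 * t)) ≠ 0 := hs_pos.ne'
  have ha2 : Real.exp (-t) ^ 2 = Real.exp (-2 * t) := by
    rw [sq, ← Real.exp_add]; ring_nf
  constructor
  · -- positivity of κ
    rcases hm with hm | ⟨hm, ht'⟩
    · have := div_pos (Real.exp_pos (-2 * t)) hs_pos
      show 0 < m + Real.exp (-2 * t) / (1 - Real.exp (-2 * t)); linarith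
    · have h1m : (1:ℝ) < 1 - 1 / m := by
        have : 1 / m < 0 := one_div_neg.mpr hm
        linarith
      have hexp : Real.exp (2 * t) < 1 - 1 / m := by
        have h := Real.exp_lt_exp.mpr (show 2 * t < Real.log (1 - 1 / m) by linarith)
        rwa [Real.exp_log (by linarith)] at h
      have hu1 : (1:ℝ) < Real.exp (2 * t) := by
        rw [← Real.exp_zero]; exact Real.exp_lt_exp.mpr (by linarith)
      have key : Real.exp (-2 * t) / (1 - Real.exp (-2 * t))
          = 1 / (Real.exp (2 * t) - 1) := by
        rw [show (-2:ℝ) * t = -(2 * t) by ring, Real.exp_neg]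
        have h0 : Real.exp (2 * t) ≠ 0 := (Real.exp_pos _).ne'
        rw [div_eq_div_iff]
        · field_simp
        · have : (Real.exp (2*t))⁻¹ < 1 := inv_lt_one_of_one_lt₀ hu1
          linarith
        · linarith
      have hlt : Real.exp (2 * t) - 1 < 1 / (-m) := by
        rw [div_neg]
        have : 1 - 1 / m = 1 + -(1 / m) := by ring
        linarith
      have hfin : -m < 1 / (Real.exp (2 * t) - 1) := by
        have hp : (0:ℝ) < Real.exp (2 * t) - 1 := by linarith
        have h := one_div_lt_one_div_of_lt hp hlt
        rwa [one_div_one_div] at h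
      show 0 < m + Real.exp (-2 * t) / (1 - Real.exp (-2 * t)); rw [key]; linarith
  · -- strong log-concavity
    intro x
    set a : ℝ := Real.exp (-t) with ha
    set s : ℝ := 1 - Real.exp (-2 * t) with hsdef
    set C : ℝ := Real.log ((2 * π * s) ^ (-(d:ℝ) / 2)) - Real.log (ouMarginal d t p0 y) with hC
    have hApos : (0:ℝ) < (2 * π * s) ^ (-(d:ℝ) / 2) :=
      Real.rpow_pos_of_pos (by positivity) _
    have hF : (fun z => Real.log (ouPosterior d t p0 z y))
        = (fun z => Real.log (p0 z))
          + fun z : EuclideanSpace ℝ (Fin d) => -‖y - a • z‖ ^ 2 / (2 * s) + C := by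
      funext z
      have hkpos : 0 < ouKernel d t z y := mul_pos hApos (Real.exp_pos _)
      simp only [Pi.add_apply]
      rw [ouPosterior, Real.log_div (mul_pos (hp0_pos z) hkpos).ne' h_marg_pos.ne',
        Real.log_mul (hp0_pos z).ne' hkpos.ne', ouKernel,
        Real.log_mul hApos.ne' (Real.exp_pos _).ne', Real.log_exp]
      ring
    have hlog_cd : ContDiff ℝ 2 (fun z => Real.log (p0 z)) :=
      hp0_smooth.log fun z => (hp0_pos z).ne'
    have hq_cd : ContDiff ℝ 2
        (fun z : EuclideanSpace ℝ (Fin d) => -‖y - a • z‖ ^ 2 / (2 * s) + C) := by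
      have h1 : ContDiff ℝ 2 (fun z : EuclideanSpace ℝ (Fin d) => y - a • z) :=
        contDiff_const.sub (contDiff_id.const_smul a)
      exact ((((contDiff_norm_sq ℝ).comp h1).neg).div_const (2 * s)).add contDiff_const
    have hentry : ∀ i j, hessianMatrix d (fun z => Real.log (ouPosterior d t p0 z y)) x i j
        = hessianMatrix d (fun z => Real.log (p0 z)) x i j
          + (-(Real.exp (-2 * t) / s)) * (if i = j then 1 else 0) := by
      intro i j
      show iteratedFDeriv ℝ 2 _ x _ = _
      rw [hF, iteratedFDeriv_add_apply hlog_cd.contDiffAt hq_cd.contDiffAt, ContinuousMultilinearMap.add_apply,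
        quadC_hessian y a s C hs x _ _]
      have hinner : (inner ℝ (EuclideanSpace.single i (1:ℝ)) (EuclideanSpace.single j (1:ℝ)))
          = if i = j then 1 else 0 := by
        simp [EuclideanSpace.inner_single_left, EuclideanSpace.single_apply, eq_comm]
      rw [hinner, ha2]
      rfl
    have hmateq : ((-(hessianMatrix d (fun z => Real.log (ouPosterior d t p0 z y)) x))
          - (m + Real.exp (-2 * t) / (1 - Real.exp (-2 * t))) •
            (1 : Matrix (Fin d) (Fin d) ℝ))
        = ((-(hessianMatrix d (fun z => Real.log (p0 z)) x))
          - m • (1 : Matrix (Fin d) (Fin d) ℝ)) := by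
      ext i j
      simp only [Matrix.sub_apply, Matrix.neg_apply, Matrix.smul_apply, Matrix.one_apply,
        smul_eq_mul]
      rw [hentry i j]
      rcases eq_or_ne i j with h | h
      · simp only [h, if_pos rfl]; rw [← hsdef]; ring
      · simp only [if_neg h]; ring
    rw [hmateq]
    exact hHess x


end
end
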